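/- Let C_GW be the class of all finite Kripke models whose frame consists of a root x and a nonempty finite set F of worlds not containing x, where the accessibility relation R is the reflexive relation with x R y for every world y and no other pairs (a root below a finite antichain of final worlds). Then C_GW enjoys 3-IP. -/

import Mathlib

/-- Modal formulas over countably many variables. -/
inductive ModalForm : Type where
  | var : ℕ → ModalForm
  | bot : ModalForm
  | and : ModalForm → ModalForm → ModalForm
  | or : ModalForm → ModalForm → ModalForm
  | not : ModalForm → ModalForm
  | imp : ModalForm → ModalForm → ModalForm
  | box : ModalForm → ModalForm

namespace ModalForm

mutual
  /-- positively occurring variables -/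
  def vpos : ModalForm → Finset ℕ
    | var p => {p}
    | bot => ∅
    | and φ ψ => vpos φ ∪ vpos ψ
    | or φ ψ => vpos φ ∪ vpos ψ
    | not φ => vneg φ
    | imp φ ψ => vneg φ ∪ vpos ψ
    | box φ => vpos φ
  /-- negatively occurring variables -/
  def vneg : ModalForm → Finset ℕ
    | var _ => ∅
    | bot => ∅
    | and φ ψ => vneg φ ∪ vneg ψ
    | or φ ψ => vneg φ ∪ vneg ψ
    | not φ => vpos φ
    | imp φ ψ => vpos φ ∪ vneg ψ
    | box φ => vneg φ
end

/-- Modal depth: maximal nesting of `□`. -/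
def depth : ModalForm → ℕ
  | var _ => 0
  | bot => 0
  | and φ ψ => max (depth φ) (depth ψ)
  | or φ ψ => max (depth φ) (depth ψ)
  | not φ => depth φ
  | imp φ ψ => max (depth φ) (depth ψ)
  | box φ => depth φ + 1

/-- `◇φ := ¬□¬φ` -/
def dia (φ : ModalForm) : ModalForm := not (box (not φ))

/-- `⊤ := ¬⊥` -/
def top : ModalForm := not bot

end ModalForm

/-- An S4 Kripke frame: nonempty set of worlds with a reflexive transitive relation. -/
structure KFrame : Type 1 where
  W : Type
  R : W → W → Prop
  nonempty : Nonempty W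
  refl : ∀ x, R x x
  trans : ∀ x y z, R x y → R y z → R x z

/-- A Kripke model: a frame with a valuation. -/
structure KModel : Type 1 extends KFrame where
  val : W → ℕ → Prop

/-- The model based on frame `F` with valuation `V`. -/
def KFrame.toModel (F : KFrame) (V : F.W → ℕ → Prop) : KModel :=
  { toKFrame := F, val := V }

/-- Satisfaction in a Kripke model. -/
def KModel.Sat (M : KModel) : M.W → ModalForm → Prop
  | w, .var p => M.val w p
  | _, .bot => False
  | w, .and φ ψ => M.Sat w φ ∧ M.Sat w ψ
  | w, .or φ ψ => M.Sat w φ ∨ M.Sat w ψ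
  | w, .not φ => ¬ M.Sat w φ
  | w, .imp φ ψ => M.Sat w φ → M.Sat w ψ
  | w, .box φ => ∀ y, M.R w y → M.Sat y φ

/-- `(M0,w0) →ₙ^{(P⁺,P⁻)} (M1,w1)`: every `(P⁺,P⁻)`-formula of depth ≤ n
satisfied at `(M0,w0)` is satisfied at `(M1,w1)`. -/
def ModalArrow (Pp Pm : Finset ℕ) (n : ℕ) (M0 : KModel) (w0 : M0.W)
    (M1 : KModel) (w1 : M1.W) : Prop :=
  ∀ φ : ModalForm, φ.vpos ⊆ Pp → φ.vneg ⊆ Pm → φ.depth ≤ n →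
    M0.Sat w0 φ → M1.Sat w1 φ

/-- p-morphism between frames. -/
def PMorphism (F G : KFrame) (f : F.W → G.W) : Prop :=
  (∀ x y, F.R x y → G.R (f x) (f y)) ∧
  (∀ x w, G.R (f x) w → ∃ z, F.R x z ∧ f z = w)

/-- The class `C` of Kripke models enjoys `n`-IP. -/
def EnjoysIP (C : Set KModel) (n : ℕ) : Prop :=
  ∀ (Pp Pm : Finset ℕ) (M0 M1 : KModel), M0 ∈ C → M1 ∈ C →
    ∀ (w0 : M0.W) (w1 : M1.W), ModalArrow Pp Pm n M0 w0 M1 w1 →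
      ∃ (F : KFrame) (wstar : F.W) (f0 : F.W → M0.W) (f1 : F.W → M1.W),
        (∀ V : F.W → ℕ → Prop, F.toModel V ∈ C) ∧
        PMorphism F M0.toKFrame f0 ∧
        PMorphism F M1.toKFrame f1 ∧
        f0 wstar = w0 ∧ f1 wstar = w1 ∧
        ∀ x : F.W, ModalArrow Pp Pm 0 M0 (f0 x) M1 (f1 x)

/-- A world is final iff every successor is also a predecessor. -/
def KModel.Final (M : KModel) (w : M.W) : Prop := ∀ y, M.R w y → M.R y w

/-- The cluster of a world. -/
def KModel.cluster (M : KModel) (w : M.W) : Set M.W := {u | M.R w u ∧ M.R u w}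

/-- Cluster `C0` of `M0` matches cluster `C1` of `M1`. -/
def Matches (Pp Pm : Finset ℕ) (M0 M1 : KModel) (C0 : Set M0.W) (C1 : Set M1.W) : Prop :=
  (∀ u0 ∈ C0, ∃ u1 ∈ C1, ModalArrow Pp Pm 0 M0 u0 M1 u1) ∧
  (∀ u1 ∈ C1, ∃ u0 ∈ C0, ModalArrow Pp Pm 0 M0 u0 M1 u1)

/-- `φ` is satisfied at every world of every model in `C`. -/
def ValidOn (C : Set KModel) (φ : ModalForm) : Prop :=
  ∀ M ∈ C, ∀ w : M.W, M.Sat w φ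

/-- The class of GW models: a root `x` below a finite antichain `F` of final worlds. -/
def C_GW : Set KModel :=
  {M | Finite M.W ∧ ∃ (x : M.W) (F : Set M.W), x ∉ F ∧ F.Nonempty ∧
    (∀ w : M.W, w = x ∨ w ∈ F) ∧
    ∀ u v : M.W, M.R u v ↔ (u = v ∨ u = x)}

/-!
In a GW model a world is either the root or final, and a final world sees only itself. Given
`(M0,w0) →₃ (M1,w1)`, take as common frame a root below the pairs `(u0,u1)` of final successors of
`w0` and `w1` with `(M0,u0) →₀ (M1,u1)`, the root being sent to `w0` and `w1`. Both projections
are p-morphisms as soon as every final successor on either side has a partner on the other. Forth,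
this is witnessed by the depth-2 formula `◇□χ(u0)`, `χ(u0)` the characteristic depth-0 formula
of `u0`; back, by the depth-3 formula `□◇⋁ □χ(u0)` over the finitely many final successors `u0`
of `w0`.
-/

namespace ModalForm

/-- `φ` is a `(P⁺,P⁻)`-formula of depth at most `n`. -/
def InLang (Pp Pm : Finset ℕ) (n : ℕ) (φ : ModalForm) : Prop :=
  φ.vpos ⊆ Pp ∧ φ.vneg ⊆ Pm ∧ φ.depth ≤ n

def conj : List ModalForm → ModalForm
  | [] => top
  | φ :: l => and φ (conj l)

def disj : List ModalForm → ModalForm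
  | [] => bot
  | φ :: l => or φ (disj l)

namespace InLang

variable {Pp Pm : Finset ℕ} {n : ℕ} {φ : ModalForm}

theorem var {p : ℕ} (hp : p ∈ Pp) : (var p).InLang Pp Pm 0 := by
  simp [InLang, vpos, vneg, depth, hp]

theorem not_var {p : ℕ} (hp : p ∈ Pm) : (not (.var p)).InLang Pp Pm 0 := by
  simp [InLang, vpos, vneg, depth, hp]

theorem bot : bot.InLang Pp Pm n := by
  simp [InLang, vpos, vneg, depth]

theorem box (h : φ.InLang Pp Pm n) : φ.box.InLang Pp Pm (n + 1) := by
  simpa [InLang, vpos, vneg, depth] using h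

theorem dia (h : φ.InLang Pp Pm n) : φ.dia.InLang Pp Pm (n + 1) := by
  simpa [InLang, ModalForm.dia, vpos, vneg, depth] using h

theorem conj : ∀ {l : List ModalForm}, (∀ ψ ∈ l, ψ.InLang Pp Pm n) → (conj l).InLang Pp Pm n
  | [], _ => by simp [InLang, ModalForm.conj, top, vpos, vneg, depth]
  | ψ :: l, h => by
    have hψ := h ψ List.mem_cons_self
    have hl := conj fun χ hχ => h χ (List.mem_cons_of_mem ψ hχ)
    simp only [InLang, ModalForm.conj, vpos, vneg, depth] at hψ hl ⊢
    grind

theorem disj : ∀ {l : List ModalForm}, (∀ ψ ∈ l, ψ.InLang Pp Pm n) → (disj l).InLang Pp Pm n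
  | [], _ => bot
  | ψ :: l, h => by
    have hψ := h ψ List.mem_cons_self
    have hl := disj fun χ hχ => h χ (List.mem_cons_of_mem ψ hχ)
    simp only [InLang, ModalForm.disj, vpos, vneg, depth] at hψ hl ⊢
    grind

end InLang

end ModalForm

open ModalForm

namespace KModel

variable (M : KModel) {w : M.W}

@[simp]
theorem sat_dia {φ : ModalForm} : M.Sat w φ.dia ↔ ∃ y, M.R w y ∧ M.Sat y φ := by
  simp [dia, Sat]

@[simp]
theorem sat_conj : ∀ {l : List ModalForm}, M.Sat w (conj l) ↔ ∀ φ ∈ l, M.Sat w φ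
  | [] => by simp [conj, top, Sat]
  | φ :: l => by simp [conj, Sat, sat_conj]

@[simp]
theorem sat_disj : ∀ {l : List ModalForm}, M.Sat w (disj l) ↔ ∃ φ ∈ l, M.Sat w φ
  | [] => by simp [disj, Sat]
  | φ :: l => by simp [disj, Sat, sat_disj]

end KModel

theorem ModalArrow.sat {Pp Pm : Finset ℕ} {n : ℕ} {M0 M1 : KModel} {w0 : M0.W} {w1 : M1.W}
    (h : ModalArrow Pp Pm n M0 w0 M1 w1) {φ : ModalForm} (hφ : φ.InLang Pp Pm n) :
    M0.Sat w0 φ → M1.Sat w1 φ :=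
  h φ hφ.1 hφ.2.1 hφ.2.2

theorem ModalArrow.mono {Pp Pm : Finset ℕ} {n m : ℕ} {M0 M1 : KModel} {w0 : M0.W} {w1 : M1.W}
    (h : ModalArrow Pp Pm n M0 w0 M1 w1) (hmn : m ≤ n) : ModalArrow Pp Pm m M0 w0 M1 w1 :=
  fun φ hp hm hd => h φ hp hm (hd.trans hmn)

section DepthZero

variable {Pp Pm : Finset ℕ} {M N : KModel} {u : M.W} {v : N.W}

/- Negation swaps the roles of `P⁺` and `P⁻`, so the induction carries both directions. -/
theorem sat_imp_sat_of_val (hp : ∀ p ∈ Pp, M.val u p → N.val v p)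
    (hm : ∀ p ∈ Pm, N.val v p → M.val u p) :
    ∀ φ : ModalForm, φ.depth = 0 →
      (φ.vpos ⊆ Pp → φ.vneg ⊆ Pm → M.Sat u φ → N.Sat v φ) ∧
      (φ.vpos ⊆ Pm → φ.vneg ⊆ Pp → N.Sat v φ → M.Sat u φ)
  | .var p, _ => by
    simp only [vpos, vneg, KModel.Sat, Finset.singleton_subset_iff]
    exact ⟨fun h _ => hp p h, fun h _ => hm p h⟩
  | .bot, _ => by simp [KModel.Sat]
  | .and φ ψ, hd | .or φ ψ, hd | .imp φ ψ, hd => by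
    simp only [depth, Nat.max_eq_zero_iff] at hd
    have ihφ := sat_imp_sat_of_val hp hm φ hd.1
    have ihψ := sat_imp_sat_of_val hp hm ψ hd.2
    simp only [vpos, vneg, KModel.Sat, Finset.union_subset_iff]
    tauto
  | .not φ, hd => by
    have ihφ := sat_imp_sat_of_val hp hm φ hd
    simp only [vpos, vneg, KModel.Sat]
    tauto
  | .box _, hd => by simp [depth] at hd

theorem modalArrow_zero_of_val (hp : ∀ p ∈ Pp, M.val u p → N.val v p)
    (hm : ∀ p ∈ Pm, N.val v p → M.val u p) : ModalArrow Pp Pm 0 M u N v :=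
  fun φ hφp hφm hd => (sat_imp_sat_of_val hp hm φ (Nat.le_zero.mp hd)).1 hφp hφm

end DepthZero

open Classical in
/-- A world `v` satisfies it iff `(M,u) →₀^{(P⁺,P⁻)} (N,v)`. -/
noncomputable def charFormula (Pp Pm : Finset ℕ) (M : KModel) (u : M.W) : ModalForm :=
  conj ((Pp.filter (M.val u)).toList.map var ++
    (Pm.filter fun p => ¬ M.val u p).toList.map fun p => not (var p))

section CharFormula

variable (Pp Pm : Finset ℕ) {M N : KModel} (u : M.W) {v : N.W}

theorem charFormula_inLang : (charFormula Pp Pm M u).InLang Pp Pm 0 := by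
  classical
  refine InLang.conj fun φ hφ => ?_
  simp only [List.mem_append, List.mem_map, Finset.mem_toList, Finset.mem_filter] at hφ
  rcases hφ with ⟨p, ⟨hp, -⟩, rfl⟩ | ⟨p, ⟨hp, -⟩, rfl⟩
  exacts [InLang.var hp, InLang.not_var hp]

theorem sat_charFormula_self : M.Sat u (charFormula Pp Pm M u) := by
  classical
  simp only [charFormula, KModel.sat_conj, List.mem_append, List.mem_map, Finset.mem_toList,
    Finset.mem_filter]
  rintro φ (⟨p, ⟨-, hp⟩, rfl⟩ | ⟨p, ⟨-, hp⟩, rfl⟩)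
  exacts [hp, hp]

theorem modalArrow_zero_of_sat_charFormula (h : N.Sat v (charFormula Pp Pm M u)) :
    ModalArrow Pp Pm 0 M u N v := by
  classical
  simp only [charFormula, KModel.sat_conj, List.mem_append, List.mem_map, Finset.mem_toList,
    Finset.mem_filter] at h
  refine modalArrow_zero_of_val (fun p hp hu => h (var p) ?_) (fun p hp hv => ?_)
  · exact Or.inl ⟨p, ⟨hp, hu⟩, rfl⟩
  · by_contra hu
    exact h (not (var p)) (Or.inr ⟨p, ⟨hp, hu⟩, rfl⟩) hv

end CharFormula

def KFrame.IsGWRoot (F : KFrame) (x : F.W) : Prop :=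
  ∀ u v, F.R u v ↔ u = v ∨ u = x

namespace KFrame.IsGWRoot

variable {F : KFrame} {x : F.W}

theorem R_root (hx : F.IsGWRoot x) (v : F.W) : F.R x v :=
  (hx x v).2 (Or.inr rfl)

theorem eq_of_R (hx : F.IsGWRoot x) {u v : F.W} (hu : u ≠ x) (h : F.R u v) : v = u :=
  (((hx u v).1 h).resolve_right hu).symm

theorem exists_R_ne (hx : F.IsGWRoot x) (hne : ∃ u, u ≠ x) (v : F.W) :
    ∃ u, F.R v u ∧ u ≠ x := by
  by_cases hv : v = x
  · obtain ⟨u, hu⟩ := hne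
    exact ⟨u, hv ▸ hx.R_root u, hu⟩
  · exact ⟨v, F.refl v, hv⟩

theorem sat_box_iff {M : KModel} {x : M.W} (hx : M.IsGWRoot x) {u : M.W} (hu : u ≠ x)
    {φ : ModalForm} : M.Sat u φ.box ↔ M.Sat u φ :=
  ⟨fun h => h u (M.refl u), fun h _ huv => hx.eq_of_R hu huv ▸ h⟩

end KFrame.IsGWRoot

theorem exists_isGWRoot_of_mem_C_GW {M : KModel} (hM : M ∈ C_GW) :
    Finite M.W ∧ ∃ x, M.IsGWRoot x ∧ ∃ u, u ≠ x := by
  obtain ⟨hfin, x, F, hxF, ⟨u, hu⟩, -, hR⟩ := hM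
  exact ⟨hfin, x, hR, u, fun h => hxF (h ▸ hu)⟩

def gwFrame (A : Type) : KFrame where
  W := Option A
  R u v := u = v ∨ u = none
  nonempty := ⟨none⟩
  refl _ := Or.inl rfl
  trans := by rintro x y z (rfl | rfl) (h | h) <;> simp_all

theorem gwFrame_toModel_mem (A : Type) [Finite A] [Nonempty A] (V : Option A → ℕ → Prop) :
    (gwFrame A).toModel V ∈ C_GW := by
  refine ⟨inferInstanceAs (Finite (Option A)), none, Set.range some, ?_, Set.range_nonempty _,
    ?_, fun _ _ => Iff.rfl⟩
  · rintro ⟨a, ha⟩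
    exact Option.some_ne_none a ha
  · rintro (_ | a)
    exacts [Or.inl rfl, Or.inr (Set.mem_range_self a)]

theorem KFrame.IsGWRoot.pMorphism_gwFrame {F : KFrame} {x : F.W} (hx : F.IsGWRoot x) {A : Type}
    {w : F.W} {g : A → F.W} (hg : ∀ a, F.R w (g a) ∧ g a ≠ x)
    (hsurj : ∀ v, F.R w v → v ≠ x → ∃ a, g a = v) :
    PMorphism (gwFrame A) F fun o => o.elim w g := by
  constructor
  · rintro o (_ | a) (rfl | rfl)
    exacts [F.refl _, F.refl _, F.refl _, (hg a).1]
  · rintro (_ | a) v hv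
    · by_cases hvx : v = x
      · subst hvx
        exact ⟨none, Or.inl rfl, ((hx w v).1 hv).elim id id⟩
      · obtain ⟨a, rfl⟩ := hsurj v hv hvx
        exact ⟨some a, Or.inr rfl, rfl⟩
    · exact ⟨some a, Or.inl rfl, (hx.eq_of_R (hg a).2 hv).symm⟩

section Zigzag

variable {Pp Pm : Finset ℕ} {M0 M1 : KModel} {x0 : M0.W} {x1 : M1.W} {w0 : M0.W} {w1 : M1.W}

/- `◇□χ(u0)` holds at `w0`; a world of `M1` satisfying `□χ(u0)` passes `χ(u0)` to its final
successors. -/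
theorem exists_final_match_forth (hx0 : M0.IsGWRoot x0) (hx1 : M1.IsGWRoot x1)
    (hne1 : ∃ u, u ≠ x1) (h : ModalArrow Pp Pm 2 M0 w0 M1 w1)
    {u0 : M0.W} (hwu : M0.R w0 u0) (hu0 : u0 ≠ x0) :
    ∃ u1, M1.R w1 u1 ∧ u1 ≠ x1 ∧ ModalArrow Pp Pm 0 M0 u0 M1 u1 := by
  have h0 : M0.Sat w0 (charFormula Pp Pm M0 u0).box.dia :=
    M0.sat_dia.2 ⟨u0, hwu, (hx0.sat_box_iff hu0).2 (sat_charFormula_self Pp Pm u0)⟩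
  obtain ⟨y, hwy, hy⟩ := M1.sat_dia.1 (h.sat (charFormula_inLang Pp Pm u0).box.dia h0)
  obtain ⟨u1, hyu, hu1⟩ := hx1.exists_R_ne hne1 y
  exact ⟨u1, M1.trans _ _ _ hwy hyu, hu1,
    modalArrow_zero_of_sat_charFormula Pp Pm u0 (hy u1 hyu)⟩

/- `□◇⋁{□χ(u0) | u0 a final successor of w0}` holds at `w0`; at the final world `u1` the
`□◇` collapses, leaving some `□χ(u0)` true at `u1`. -/
theorem exists_final_match_back [Finite M0.W] (hx0 : M0.IsGWRoot x0)
    (hx1 : M1.IsGWRoot x1) (hne0 : ∃ u, u ≠ x0)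
    (h : ModalArrow Pp Pm 3 M0 w0 M1 w1) {u1 : M1.W} (hwu : M1.R w1 u1) (hu1 : u1 ≠ x1) :
    ∃ u0, M0.R w0 u0 ∧ u0 ≠ x0 ∧ ModalArrow Pp Pm 0 M0 u0 M1 u1 := by
  classical
  have := Fintype.ofFinite M0.W
  set L := (Finset.univ.filter fun u => M0.R w0 u ∧ u ≠ x0).toList.map
    fun u => (charFormula Pp Pm M0 u).box
  have hLang : (disj L).dia.box.InLang Pp Pm 3 := by
    refine (InLang.disj fun ψ hψ => ?_).dia.box
    obtain ⟨u, -, rfl⟩ := List.mem_map.1 hψ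
    exact (charFormula_inLang Pp Pm u).box
  have h0 : M0.Sat w0 (disj L).dia.box := by
    intro y hwy
    obtain ⟨u, hyu, hu⟩ := hx0.exists_R_ne hne0 y
    refine M0.sat_dia.2 ⟨u, hyu, M0.sat_disj.2 ⟨_, List.mem_map.2 ⟨u, ?_, rfl⟩,
      (hx0.sat_box_iff hu).2 (sat_charFormula_self Pp Pm u)⟩⟩
    simpa using ⟨M0.trans _ _ _ hwy hyu, hu⟩
  obtain ⟨z, huz, hz⟩ := M1.sat_dia.1 (h.sat hLang h0 u1 hwu)
  obtain rfl := hx1.eq_of_R hu1 huz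
  obtain ⟨ψ, hψ, hsat⟩ := M1.sat_disj.1 hz
  obtain ⟨u0, hu0, rfl⟩ := List.mem_map.1 hψ
  simp only [Finset.mem_toList, Finset.mem_filter, Finset.mem_univ, true_and] at hu0
  exact ⟨u0, hu0.1, hu0.2,
    modalArrow_zero_of_sat_charFormula Pp Pm u0 ((hx1.sat_box_iff hu1).1 hsat)⟩

end Zigzag

theorem stmt15 : EnjoysIP C_GW 3 := by
  intro Pp Pm M0 M1 hM0 hM1 w0 w1 h
  obtain ⟨hfin0, x0, hx0, hne0⟩ := exists_isGWRoot_of_mem_C_GW hM0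
  obtain ⟨hfin1, x1, hx1, hne1⟩ := exists_isGWRoot_of_mem_C_GW hM1
  have forth := fun {u0} => exists_final_match_forth hx0 hx1 hne1 (h.mono (by norm_num)) (u0 := u0)
  have back := fun {u1} => exists_final_match_back hx0 hx1 hne0 h (u1 := u1)
  let A := {a : M0.W × M1.W // (M0.R w0 a.1 ∧ a.1 ≠ x0) ∧ (M1.R w1 a.2 ∧ a.2 ≠ x1) ∧
    ModalArrow Pp Pm 0 M0 a.1 M1 a.2}
  have : Nonempty A := by
    obtain ⟨u0, hwu, hu0⟩ := hx0.exists_R_ne hne0 w0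
    obtain ⟨u1, hwu1, hu1, harr⟩ := forth hwu hu0
    exact ⟨⟨(u0, u1), ⟨hwu, hu0⟩, ⟨hwu1, hu1⟩, harr⟩⟩
  refine ⟨gwFrame A, none, (·.elim w0 (·.1.1)), (·.elim w1 (·.1.2)), gwFrame_toModel_mem A,
    hx0.pMorphism_gwFrame (fun a => a.2.1) ?_, hx1.pMorphism_gwFrame (fun a => a.2.2.1) ?_,
    rfl, rfl, ?_⟩
  · intro v hwv hv
    obtain ⟨u1, hwu1, hu1, harr⟩ := forth hwv hv
    exact ⟨⟨(v, u1), ⟨hwv, hv⟩, ⟨hwu1, hu1⟩, harr⟩, rfl⟩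
  · intro v hwv hv
    obtain ⟨u0, hwu0, hu0, harr⟩ := back hwv hv
    exact ⟨⟨(u0, v), ⟨hwu0, hu0⟩, ⟨hwv, hv⟩, harr⟩, rfl⟩
  · rintro (_ | a)
    exacts [h.mono (by norm_num), a.2.2.2]
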